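/- Let p ≥ 3 be an odd prime, let n be an odd positive integer, let m be an integer, and let ν₁, …, ν_{n−1} be integers. Set J = { i ∈ {1,…,n−1} : 2mnν_i ≢ 0 (mod p) }, and let S := p · Σ_{(x₁,…,x_{n−1}) ∈ (ℤ/pℤ)^{n−1}} e( 2mn Σ_{i=1}^{n−1} ν_i x_i² ) ∈ ℂ, where e(a) = exp(2π√−1 · ā / p). Then S is different from its complex conjugate (equivalently, S is not real) if and only if p ≡ 3 (mod 4) and #J is odd. -/

import Mathlib

open Finset

/-- The additive character `e : ℤ/pℤ → ℂ`, `e(a) = exp(2π√-1 · ā / p)`, where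
`ā ∈ {0, …, p-1}` is the representative of `a`. -/
noncomputable def zmodChar (p : ℕ) (a : ZMod p) : ℂ :=
  Complex.exp (2 * Real.pi * Complex.I * (a.val : ℂ) / (p : ℂ))

/-! The sum factors over the coordinates into one-variable sums `g(b) = ∑_y e(b y²)`, with
`g(0) = p` and `g(b) = χ(b) G` for `b ≠ 0`, where `χ` is the quadratic character and `G` its
Gauss sum; in particular `S ≠ 0`. Conjugation turns `g(b)` into `g(-b) = χ(-1) g(b)`, so
`conj S = χ(-1)^#J S`, and `χ(-1) = -1` exactly when `p ≡ 3 (mod 4)`. -/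

lemma zmodChar_eq_stdAddChar (p : ℕ) [NeZero p] (a : ZMod p) :
    zmodChar p a = ZMod.stdAddChar a := by
  rw [zmodChar, ZMod.stdAddChar_apply, ZMod.toCircle_apply]

lemma AddChar.sum_pi_apply_sum {ι A M : Type*} [Fintype ι] [DecidableEq ι] [AddCommMonoid A]
    [Fintype A] [CommSemiring M] (ψ : AddChar A M) (f : ι → A → A) :
    ∑ x : ι → A, ψ (∑ i, f i (x i)) = ∏ i, ∑ a, ψ (f i a) := by
  rw [Fintype.prod_sum]
  exact sum_congr rfl fun x _ ↦
    map_prod ψ.toMonoidHom (fun i ↦ Multiplicative.ofAdd (f i (x i))) univ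

section QuadraticGaussSum

variable {F R : Type*} [Field F] [Fintype F] [DecidableEq F] [CommRing R]

lemma sum_comp_sq_eq_sum_quadraticChar (hF : ringChar F ≠ 2) (f : F → R) :
    ∑ y, f (y ^ 2) = ∑ t, ((quadraticChar F t : R) + 1) * f t := by
  rw [← sum_fiberwise' univ (· ^ 2) f]
  refine sum_congr rfl fun t _ ↦ ?_
  rw [sum_const, nsmul_eq_mul]
  congr 1
  have hcard := quadraticChar_card_sqrts hF t
  rw [Set.toFinset_ofPred] at hcard
  exact_mod_cast congrArg (Int.cast : ℤ → R) hcard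

variable [IsDomain R]

lemma sum_addChar_mul_sq (hF : ringChar F ≠ 2) {ψ : AddChar F R} (hψ : ψ.IsPrimitive)
    {a : F} (ha : a ≠ 0) :
    ∑ y, ψ (a * y ^ 2) =
      quadraticChar F a * gaussSum ((quadraticChar F).ringHomComp (Int.castRingHom R)) ψ := by
  set χ := (quadraticChar F).ringHomComp (Int.castRingHom R)
  have hψa : ∑ t, ψ (a * t) = 0 := by
    simpa [mul_comm, ha] using AddChar.sum_mulShift a hψ
  have hχa : ∑ t, χ t * ψ (a * t) = χ a * gaussSum χ ψ := by
    have hshift := gaussSum_mulShift_eq χ ψ (Units.mk0 a ha)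
    rw [((quadraticChar_isQuadratic F).comp _).inv] at hshift
    simpa only [gaussSum, AddChar.mulShift_apply, Units.val_mk0] using hshift
  rw [sum_comp_sq_eq_sum_quadraticChar hF (fun t ↦ ψ (a * t))]
  simp only [add_mul, one_mul, sum_add_distrib, hψa, add_zero]
  exact hχa

lemma sum_addChar_neg_mul_sq (hF : ringChar F ≠ 2) {ψ : AddChar F R} (hψ : ψ.IsPrimitive)
    (a : F) :
    ∑ y, ψ (-a * y ^ 2) =
      (if a ≠ 0 then (quadraticChar F (-1) : R) else 1) * ∑ y, ψ (a * y ^ 2) := by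
  split_ifs with ha
  · rw [sum_addChar_mul_sq hF hψ ha, sum_addChar_mul_sq hF hψ (neg_ne_zero.2 ha),
      neg_eq_neg_one_mul a, map_mul]
    push_cast
    ring
  · simp [not_ne_iff.1 ha]

lemma sum_addChar_mul_sq_ne_zero [CharZero R] (hF : ringChar F ≠ 2) {ψ : AddChar F R}
    (hψ : ψ.IsPrimitive) (a : F) : ∑ y, ψ (a * y ^ 2) ≠ 0 := by
  by_cases ha : a = 0
  · simp [ha, Fintype.card_ne_zero]
  rw [sum_addChar_mul_sq hF hψ ha]
  refine mul_ne_zero (Int.cast_ne_zero.2 (quadraticChar_eq_zero_iff.not.2 ha)) ?_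
  exact gaussSum_ne_zero_of_nontrivial (Nat.cast_ne_zero.2 Fintype.card_ne_zero)
    ((MulChar.ringHomComp_ne_one_iff Int.cast_injective).2 (quadraticChar_ne_one hF)) hψ

lemma starRingEnd_prod_sum_addChar_mul_sq {ι : Type*} [Fintype ι] (hF : ringChar F ≠ 2)
    {ψ : AddChar F ℂ} (hψ : ψ.IsPrimitive) (b : ι → F) :
    starRingEnd ℂ (∏ i, ∑ y, ψ (b i * y ^ 2)) =
      (quadraticChar F (-1) : ℂ) ^ #{i | b i ≠ 0} * ∏ i, ∑ y, ψ (b i * y ^ 2) := by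
  simp only [map_prod, map_sum, ← AddChar.map_neg_eq_conj, ← neg_mul,
    sum_addChar_neg_mul_sq hF hψ, prod_mul_distrib, ← prod_filter, prod_const]

end QuadraticGaussSum

lemma quadraticChar_neg_one_pow_ne_one_iff {p : ℕ} [Fact p.Prime] (hp : p ≠ 2) (k : ℕ) :
    (quadraticChar (ZMod p) (-1) : ℂ) ^ k ≠ 1 ↔ p % 4 = 3 ∧ Odd k := by
  rw [quadraticChar_neg_one (by rwa [ZMod.ringChar_zmod_n]), ZMod.card]
  have hodd := Nat.odd_iff.1 ((Fact.out : p.Prime).odd_of_ne_two hp)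
  rcases (by omega : p % 4 = 1 ∨ p % 4 = 3) with h | h
  · simp [ZMod.χ₄_nat_one_mod_four h, h]
  · simp [ZMod.χ₄_nat_three_mod_four h, h,
      neg_one_pow_eq_one_iff_even (by norm_num : (-1 : ℂ) ≠ 1), Nat.not_even_iff_odd]

theorem reduced_cocycle_invariant_ne_conj_iff_general (p : ℕ) [Fact p.Prime] (hp : Odd p)
    (n : ℕ) (m : ℤ) (ν : Fin (n - 1) → ℤ) :
    ((p : ℂ) * ∑ x : Fin (n - 1) → ZMod p,
        zmodChar p (((2 * m * n : ℤ) : ZMod p) * ∑ i, (ν i : ZMod p) * (x i) ^ 2) ≠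
      (starRingEnd ℂ) ((p : ℂ) * ∑ x : Fin (n - 1) → ZMod p,
        zmodChar p (((2 * m * n : ℤ) : ZMod p) * ∑ i, (ν i : ZMod p) * (x i) ^ 2))) ↔
    (p % 4 = 3 ∧
      Odd (univ.filter (fun i => ((2 * m * n * ν i : ℤ) : ZMod p) ≠ 0)).card) := by
  have hp2 : p ≠ 2 := by rintro rfl; exact Nat.not_odd_iff_even.2 even_two hp
  have hF : ringChar (ZMod p) ≠ 2 := by rwa [ZMod.ringChar_zmod_n]
  have hψ := ZMod.isPrimitive_stdAddChar p
  have hS : ∑ x : Fin (n - 1) → ZMod p,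
      zmodChar p (((2 * m * n : ℤ) : ZMod p) * ∑ i, (ν i : ZMod p) * (x i) ^ 2) =
      ∏ i, ∑ y, ZMod.stdAddChar (((2 * m * n * ν i : ℤ) : ZMod p) * y ^ 2) := by
    rw [← AddChar.sum_pi_apply_sum]
    refine sum_congr rfl fun x _ ↦ ?_
    rw [zmodChar_eq_stdAddChar, mul_sum]
    push_cast
    simp only [mul_assoc]
  have hS0 : (p : ℂ) * ∏ i, ∑ y,
      ZMod.stdAddChar (((2 * m * n * ν i : ℤ) : ZMod p) * y ^ 2) ≠ 0 :=
    mul_ne_zero (Nat.cast_ne_zero.2 (Fact.out : p.Prime).ne_zero)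
      (prod_ne_zero_iff.2 fun i _ ↦ sum_addChar_mul_sq_ne_zero hF hψ _)
  rw [hS, map_mul, map_natCast, starRingEnd_prod_sum_addChar_mul_sq hF hψ, mul_left_comm,
    ne_comm, ne_eq, mul_eq_right₀ hS0, ← ne_eq]
  exact quadraticChar_neg_one_pow_ne_one_iff hp2 _

/-- The reduced quandle cocycle invariant
`S = Φ̃_p(𝒮_n(a, Δ̃^{2m})) = p · Σ_{x ∈ (ℤ/pℤ)^{n-1}} e(2mn Σᵢ νᵢ xᵢ²)` differs from its
complex conjugate if and only if `p ≡ 3 (mod 4)` and `#J` is odd, where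
`J = {i : 2mnνᵢ ≢ 0 (mod p)}`. -/
theorem reduced_cocycle_invariant_ne_conj_iff (p : ℕ) [Fact p.Prime] (hp : Odd p)
    (n : ℕ) (hn : Odd n) (hn0 : 0 < n) (m : ℤ) (ν : Fin (n - 1) → ℤ) :
    ((p : ℂ) * ∑ x : Fin (n - 1) → ZMod p,
        zmodChar p (((2 * m * n : ℤ) : ZMod p) * ∑ i, (ν i : ZMod p) * (x i) ^ 2) ≠
      (starRingEnd ℂ) ((p : ℂ) * ∑ x : Fin (n - 1) → ZMod p,
        zmodChar p (((2 * m * n : ℤ) : ZMod p) * ∑ i, (ν i : ZMod p) * (x i) ^ 2))) ↔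
    (p % 4 = 3 ∧
      Odd (univ.filter (fun i => ((2 * m * n * ν i : ℤ) : ZMod p) ≠ 0)).card) :=
  reduced_cocycle_invariant_ne_conj_iff_general p hp n m ν
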